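/- Let G be a finite group and H, K ≤ G subgroups. Then the Mackey formula holds in Burnside rings: for every y ∈ B(H), Res^G_K(Ind^G_H(y)) = Σ_{g ∈ K\G/H} Ind^K_{K ∩ gHg⁻¹}(Res^{gHg⁻¹}_{K ∩ gHg⁻¹}(c_g(y))), where the sum is over a set of representatives of (K,H)-double cosets and c_g: B(H) → B(gHg⁻¹) is the conjugation isomorphism. -/

import Mathlib

/-!
Both sides are `ℚ`-linear in `y`, so it suffices to take `y = [H/Γ]`. Then `Ind^G_H y = [G/A]`
with `A = Γ ≤ H`, and restricting to `K` splits `G/A` into the `K`-orbits of the points `aA`,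
indexed by `K \ G / A`, with stabilizers `K ∩ aAa⁻¹`. On the right, the term for `g` splits the
same way into orbits indexed by `(K ∩ gHg⁻¹) \ gHg⁻¹ / gAg⁻¹`, the orbit of `m` having stabilizer
`K ∩ (mg)A(mg)⁻¹`. Everything then reduces to the bijection `(g, m) ↦ KmgA` from the disjoint
union of these double coset spaces onto `K \ G / A`.
-/

open Pointwise Finsupp

noncomputable section

/-- Conjugacy classes of subgroups of `G`. -/
def SubgroupConj (G : Type*) [Group G] : Type _ :=
  Quotient (MulAction.orbitRel (ConjAct G) (Subgroup G))

variable {G : Type*} [Group G]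

/-- The conjugacy class of a subgroup. -/
def Subgroup.toConj (K : Subgroup G) : SubgroupConj G :=
  Quotient.mk (MulAction.orbitRel (ConjAct G) (Subgroup G)) K

/-- A representative of a conjugacy class of subgroups. -/
def SubgroupConj.rep (c : SubgroupConj G) : Subgroup G := Quotient.out c

instance : DecidableEq (SubgroupConj G) := Classical.decEq _

instance [Finite G] : Finite (Subgroup G) :=
  Finite.of_injective (fun H => (H : Set G)) fun _ _ h => SetLike.ext' h

instance [Finite G] : Finite (SubgroupConj G) := Quotient.finite _

noncomputable instance [Finite G] : Fintype (SubgroupConj G) := Fintype.ofFinite _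

instance [Finite G] (s t : Set G) : Finite (DoubleCoset.Quotient s t) :=
  Quotient.finite _

noncomputable instance [Finite G] (s t : Set G) : Fintype (DoubleCoset.Quotient s t) :=
  Fintype.ofFinite _

/-- The conjugate subgroup `g K g⁻¹`. -/
def conjSub (g : G) (K : Subgroup G) : Subgroup G :=
  Subgroup.map (MulAut.conj g).toMonoidHom K

/-- The rational Burnside ring of `G`, as the free `ℚ`-module on the classes `[G/Γ]`. -/
abbrev BQ (G : Type*) [Group G] := SubgroupConj G →₀ ℚ

variable [Finite G]

/-- The double coset formula for the product of two basis elements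
`⟨Γ⟩⟨Γ'⟩ = Σ_{g ∈ Γ'\G\Γ} ⟨Γ ∩ g⁻¹ Γ' g⟩`. -/
def basisMul (c d : SubgroupConj G) : BQ G :=
  ∑ q : DoubleCoset.Quotient (d.rep : Set G) (c.rep : Set G),
    Finsupp.single (Subgroup.toConj (c.rep ⊓ conjSub (Quotient.out q)⁻¹ d.rep)) 1

/-- The multiplication of the Burnside ring in the basis `[G/Γ]`. -/
def mulB (x y : BQ G) : BQ G :=
  x.sum fun c a => y.sum fun d b => (a * b) • basisMul c d

/-- The unit `[G/G]` of the Burnside ring. -/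
def oneB : BQ G := Finsupp.single (Subgroup.toConj (⊤ : Subgroup G)) 1

/-- Induction along an (injective) group homomorphism. -/
def indF {H : Type*} [Group H] (f : H →* G) (y : BQ H) : BQ G :=
  y.sum fun c a => Finsupp.single (Subgroup.toConj (c.rep.map f)) a

/-- Restriction of the basis element `[G/Γ]` along `f : H →* G`:
`Res [G/Γ] = Σ_{g ∈ f(H)\G/Γ} [H / f⁻¹(g Γ g⁻¹)]`. -/
def resBasis {H : Type*} [Group H] (f : H →* G) (c : SubgroupConj G) : BQ H :=
  ∑ q : DoubleCoset.Quotient (f.range : Set G) (c.rep : Set G),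
    Finsupp.single (Subgroup.toConj ((conjSub (Quotient.out q) c.rep).comap f)) 1

/-- Restriction along a group homomorphism. -/
def resF {H : Type*} [Group H] (f : H →* G) (x : BQ G) : BQ H :=
  x.sum fun c a => a • resBasis f c

/-- The mark of the basis element `[G/Γ]` at (the class of) `Δ`: the number of
`Δ`-fixed points of `G/Γ`. -/
def markBasis (c d : SubgroupConj G) : ℚ :=
  (Nat.card {x : G ⧸ c.rep // ∀ k ∈ d.rep, k • x = x} : ℚ)

/-- The mark homomorphism, in the basis `[G/Γ]`. -/
def markMap (x : BQ G) : SubgroupConj G → ℚ :=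
  fun d => x.sum fun c a => a * markBasis c d

/-- `x` is the primitive idempotent of `B(G) ⊗ ℚ` supported at the full subgroup:
its mark at `G` is `1` and its marks at all proper subgroups vanish. -/
def IsTopIdem (x : BQ G) : Prop :=
  markMap x = fun d => if d = Subgroup.toConj (⊤ : Subgroup G) then 1 else 0

/-- `|N_G(H)/H|`. -/
def nuG (H : Subgroup G) : ℕ :=
  Nat.card (Subgroup.normalizer (H : Set G) ⧸ H.subgroupOf (Subgroup.normalizer (H : Set G)))


/-- The conjugation isomorphism `H → gHg⁻¹`, as a monoid homomorphism. -/
def conjHom (g : G) (H : Subgroup G) : ↥H →* ↥(conjSub g H) :=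
  ((MulAut.conj g).toMonoidHom.comp H.subtype).codRestrict (conjSub g H)
    (fun h => Subgroup.mem_map_of_mem _ h.2)

/-- Conjugation by an element of the normalizer of `H`, as an endomorphism of `H`. -/
def normConjHom (H : Subgroup G) (n : G) (hn : n ∈ Subgroup.normalizer (H : Set G)) : ↥H →* ↥H :=
  ((MulAut.conj n).toMonoidHom.comp H.subtype).codRestrict H
    (fun h => by simpa using (Subgroup.mem_normalizer_iff.mp hn ↑h).mp h.2)


section ConjSub

variable {G : Type*} [Group G]

theorem conjSub_eq_smul (g : G) (L : Subgroup G) : conjSub g L = MulAut.conj g • L := rfl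

theorem mem_conjSub {g x : G} {L : Subgroup G} : x ∈ conjSub g L ↔ g⁻¹ * x * g ∈ L := by
  simp [conjSub_eq_smul, Subgroup.mem_pointwise_smul_iff_inv_smul_mem]

theorem conj_mem_conjSub {g x : G} {L : Subgroup G} : g * x * g⁻¹ ∈ conjSub g L ↔ x ∈ L := by
  simp [mem_conjSub, mul_assoc]

theorem conjSub_mul (a b : G) (L : Subgroup G) :
    conjSub (a * b) L = conjSub a (conjSub b L) := by
  simp only [conjSub_eq_smul, map_mul, mul_smul]

theorem conjSub_eq_self_of_mem {g : G} {L : Subgroup G} (hg : g ∈ L) : conjSub g L = L :=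
  Subgroup.conj_smul_eq_self_of_mem hg

theorem toConj_conjSub (g : G) (L : Subgroup G) : (conjSub g L).toConj = L.toConj :=
  Quotient.sound ⟨ConjAct.toConjAct g, rfl⟩

theorem exists_rep_toConj_eq_conjSub (L : Subgroup G) : ∃ x : G, L.toConj.rep = conjSub x L := by
  obtain ⟨a, ha⟩ : (MulAction.orbitRel (ConjAct G) (Subgroup G)).r L.toConj.rep L :=
    Quotient.exact (Quotient.out_eq _)
  exact ⟨ConjAct.ofConjAct a, ha.symm⟩

end ConjSub

section Hom

variable {G G' : Type*} [Group G] [Group G']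

theorem map_conjSub (f : G →* G') (u : G) (L : Subgroup G) :
    (conjSub u L).map f = conjSub (f u) (L.map f) := by
  simp only [conjSub, Subgroup.map_map]
  congr 1
  ext
  simp

theorem comap_conjSub (f : G →* G') (u : G) (L : Subgroup G') :
    (conjSub (f u) L).comap f = conjSub u (L.comap f) := by
  ext x
  simp [mem_conjSub]

theorem toConj_map_rep_toConj (f : G →* G') (L : Subgroup G) :
    (L.toConj.rep.map f).toConj = (L.map f).toConj := by
  obtain ⟨x, hx⟩ := exists_rep_toConj_eq_conjSub L
  rw [hx, map_conjSub, toConj_conjSub]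

end Hom

section DoubleCosetReindex

variable {G : Type*} [Group G] {β : Type*} [AddCommMonoid β]

theorem doubleCoset_mk_mul_eq_mk_mul_iff (S T : Subgroup G) (x a b : G) :
    DoubleCoset.mk S T (a * x) = DoubleCoset.mk S T (b * x) ↔
      DoubleCoset.mk S (conjSub x T) a = DoubleCoset.mk S (conjSub x T) b := by
  simp only [DoubleCoset.eq, mem_conjSub]
  constructor
  · rintro ⟨s, hs, t, ht, h⟩
    exact ⟨s, hs, x * t * x⁻¹, by simpa [mul_assoc] using ht, by
      rw [← mul_inv_cancel_right b x, h]; group⟩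
  · rintro ⟨s, hs, t, ht, rfl⟩
    exact ⟨s, hs, x⁻¹ * t * x, ht, by group⟩

def doubleCosetMulRight (S T : Subgroup G) (x : G) :
    DoubleCoset.Quotient (S : Set G) (conjSub x T) ≃ DoubleCoset.Quotient (S : Set G) T :=
  Quotient.congr (Equiv.mulRight x) fun a b =>
    by simpa only [DoubleCoset.eq'', Equiv.coe_mulRight] using
      (doubleCoset_mk_mul_eq_mk_mul_iff S T x a b).symm

theorem sum_doubleCoset_conjSub [Finite G] (S T : Subgroup G) (x : G) (φ : G → β)
    (hφ : ∀ a b, DoubleCoset.mk S T a = DoubleCoset.mk S T b → φ a = φ b) :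
    ∑ q : DoubleCoset.Quotient (S : Set G) (conjSub x T), φ (q.out * x) =
      ∑ q : DoubleCoset.Quotient (S : Set G) T, φ q.out := by
  refine Fintype.sum_equiv (doubleCosetMulRight S T x) _ _ fun q => hφ _ _ ?_
  conv_rhs => rw [DoubleCoset.out_eq', ← DoubleCoset.out_eq' _ _ q]
  rfl

end DoubleCosetReindex

section Restriction

variable {G H : Type*} [Group G] [Group H]

/-- The class in `B(H)` of the `H`-orbit of the point `aL` of `G/L`, where `H` acts through
`f`. -/
def orbitClass (f : H →* G) (L : Subgroup G) (a : G) : BQ H :=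
  Finsupp.single ((conjSub a L).comap f).toConj 1

theorem orbitClass_eq_of_mk_eq (f : H →* G) (L : Subgroup G) {a b : G}
    (h : DoubleCoset.mk f.range L a = DoubleCoset.mk f.range L b) :
    orbitClass f L a = orbitClass f L b := by
  obtain ⟨_, ⟨k, rfl⟩, l, hl, rfl⟩ := (DoubleCoset.eq _ _ a b).mp h
  unfold orbitClass
  rw [conjSub_mul, conjSub_eq_self_of_mem hl, conjSub_mul, comap_conjSub, toConj_conjSub]

theorem resBasis_toConj [Finite G] (f : H →* G) (L : Subgroup G) :
    resBasis f L.toConj = ∑ q : DoubleCoset.Quotient (f.range : Set G) L, orbitClass f L q.out := by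
  obtain ⟨x, hx⟩ := exists_rep_toConj_eq_conjSub L
  unfold resBasis
  rw [hx]
  simp_rw [← conjSub_mul]
  exact sum_doubleCoset_conjSub _ _ x (orbitClass f L) fun _ _ => orbitClass_eq_of_mk_eq f L

end Restriction

section Intersection

variable {G : Type*} [Group G]

theorem map_inclusion_comap_inclusion (K M : Subgroup G) (X : Subgroup M) :
    (X.comap (Subgroup.inclusion (inf_le_right : K ⊓ M ≤ M))).map
        (Subgroup.inclusion (inf_le_left : K ⊓ M ≤ K)) =
      (X.map M.subtype).comap K.subtype := by
  ext ⟨x, hxK⟩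
  constructor
  · rintro ⟨⟨y, hyK, hyM⟩, hy, hyx⟩
    obtain rfl : y = x := congrArg Subtype.val hyx
    exact ⟨⟨y, hyM⟩, hy, rfl⟩
  · rintro ⟨⟨y, hyM⟩, hy, rfl⟩
    exact ⟨⟨y, hxK, hyM⟩, hy, rfl⟩

theorem mem_range_inclusion_inf_iff (K M : Subgroup G) (m : M) :
    m ∈ (Subgroup.inclusion (inf_le_right : K ⊓ M ≤ M)).range ↔ (m : G) ∈ K :=
  ⟨fun ⟨w, hw⟩ => hw ▸ w.2.1, fun hm => ⟨⟨m, hm, m.2⟩, rfl⟩⟩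

theorem map_conjHom_map_subtype (g : G) (H : Subgroup G) (Γ : Subgroup H) :
    (Γ.map (conjHom g H)).map (conjSub g H).subtype = conjSub g (Γ.map H.subtype) := by
  rw [Subgroup.map_map]
  exact (Subgroup.map_map Γ (MulAut.conj g).toMonoidHom H.subtype).symm

theorem mem_map_conjHom_iff (g : G) (H : Subgroup G) (Γ : Subgroup H) (m : conjSub g H) :
    m ∈ Γ.map (conjHom g H) ↔ (m : G) ∈ conjSub g (Γ.map H.subtype) := by
  rw [← map_conjHom_map_subtype]
  exact (Subgroup.mem_map_iff_mem Subtype.val_injective).symm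

end Intersection

section Decomposition

variable {G : Type*} [Group G] {K H A : Subgroup G}

theorem doubleCoset_mk_mul_eq_iff_of_conjSub (hA : A ≤ H) {g : G} {S B : Subgroup (conjSub g H)}
    (hS : ∀ m, m ∈ S ↔ (m : G) ∈ K) (hB : ∀ m, m ∈ B ↔ (m : G) ∈ conjSub g A)
    (m m' : conjSub g H) :
    DoubleCoset.mk K A (m * g) = DoubleCoset.mk K A (m' * g) ↔
      DoubleCoset.mk S B m = DoubleCoset.mk S B m' := by
  rw [DoubleCoset.eq, DoubleCoset.eq]
  constructor
  · rintro ⟨k, hk, γ, hγ, he⟩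
    have hm' : (m' : G) = k * m * (g * γ * g⁻¹) := by
      rw [← mul_inv_cancel_right (m' : G) g, he]; group
    have hb : g * γ * g⁻¹ ∈ conjSub g H := conj_mem_conjSub.mpr (hA hγ)
    have hkM : k ∈ conjSub g H := by
      have hk' : k = m' * (g * γ * g⁻¹)⁻¹ * (m : G)⁻¹ := by rw [hm']; group
      rw [hk']
      exact mul_mem (mul_mem m'.2 (inv_mem hb)) (inv_mem m.2)
    exact ⟨⟨k, hkM⟩, (hS _).mpr hk, ⟨_, hb⟩, (hB _).mpr (conj_mem_conjSub.mpr hγ),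
      Subtype.ext hm'⟩
  · rintro ⟨k, hk, b, hb, rfl⟩
    exact ⟨k, (hS k).mp hk, g⁻¹ * b * g, mem_conjSub.mp ((hB b).mp hb), by push_cast; group⟩

theorem doubleCoset_mk_mul_eq_of_mem_conjSub {g m : G} (hm : m ∈ conjSub g H) :
    DoubleCoset.mk K H (m * g) = DoubleCoset.mk K H g :=
  (DoubleCoset.eq _ _ _ _).mpr ⟨1, one_mem K, _, inv_mem (mem_conjSub.mp hm), by group⟩

theorem exists_mem_conjSub_doubleCoset_mk_mul_eq {a g : G}
    (hga : DoubleCoset.mk K H g = DoubleCoset.mk K H a) :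
    ∃ m ∈ conjSub g H, DoubleCoset.mk K A (m * g) = DoubleCoset.mk K A a := by
  obtain ⟨k, hk, h, hh, rfl⟩ := (DoubleCoset.eq _ _ _ _).mp hga
  exact ⟨g * h * g⁻¹, conj_mem_conjSub.mpr hh,
    (DoubleCoset.eq _ _ _ _).mpr ⟨k, hk, 1, one_mem A, by group⟩⟩

theorem doubleCoset_mk_eq_of_le (hA : A ≤ H) {a b : G}
    (h : DoubleCoset.mk K A a = DoubleCoset.mk K A b) :
    DoubleCoset.mk K H a = DoubleCoset.mk K H b := by
  obtain ⟨k, hk, γ, hγ, e⟩ := (DoubleCoset.eq _ _ _ _).mp h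
  exact (DoubleCoset.eq _ _ _ _).mpr ⟨k, hk, γ, hA hγ, e⟩

/-- The double cosets `K \ G / A` inside a single double coset `KgH` correspond to the double
cosets `(K ∩ gHg⁻¹) \ gHg⁻¹ / gAg⁻¹`, via `m ↦ KmgA`. -/
theorem sum_doubleCoset_eq_sum_sum_conjSub [Finite G] (hA : A ≤ H) {β : Type*} [AddCommMonoid β]
    (φ : G → β) (hφ : ∀ a b, DoubleCoset.mk K A a = DoubleCoset.mk K A b → φ a = φ b)
    (S B : (q : DoubleCoset.Quotient (K : Set G) H) → Subgroup (conjSub q.out H))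
    (hS : ∀ q m, m ∈ S q ↔ (m : G) ∈ K) (hB : ∀ q m, m ∈ B q ↔ (m : G) ∈ conjSub q.out A) :
    ∑ q : DoubleCoset.Quotient (K : Set G) H,
        ∑ r : DoubleCoset.Quotient (S q : Set (conjSub q.out H)) (B q), φ (r.out * q.out) =
      ∑ p : DoubleCoset.Quotient (K : Set G) A, φ p.out := by
  rw [Finset.sum_sigma', Finset.univ_sigma_univ]
  let Φ (p : Σ q : DoubleCoset.Quotient (K : Set G) H,
      DoubleCoset.Quotient (S q : Set (conjSub q.out H)) (B q)) :
      DoubleCoset.Quotient (K : Set G) A :=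
    DoubleCoset.mk K A (p.2.out * p.1.out)
  have hΦ : Function.Bijective Φ := by
    constructor
    · rintro ⟨q, r⟩ ⟨q', r'⟩ h
      obtain rfl : q = q' := calc
        q = DoubleCoset.mk K H (r.out * q.out) := by
          rw [doubleCoset_mk_mul_eq_of_mem_conjSub r.out.2, DoubleCoset.out_eq']
        _ = DoubleCoset.mk K H (r'.out * q'.out) := doubleCoset_mk_eq_of_le hA h
        _ = q' := by rw [doubleCoset_mk_mul_eq_of_mem_conjSub r'.out.2, DoubleCoset.out_eq']
      have hr := (doubleCoset_mk_mul_eq_iff_of_conjSub hA (hS q) (hB q) _ _).mp h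
      rw [DoubleCoset.out_eq', DoubleCoset.out_eq'] at hr
      exact congrArg (Sigma.mk q) hr
    · intro p
      set q := DoubleCoset.mk K H p.out
      obtain ⟨m, hm, hmp⟩ :=
        exists_mem_conjSub_doubleCoset_mk_mul_eq (A := A) (DoubleCoset.out_eq' K H q)
      refine ⟨⟨q, DoubleCoset.mk (S q) (B q) ⟨m, hm⟩⟩, ?_⟩
      have hr := (doubleCoset_mk_mul_eq_iff_of_conjSub hA (hS q) (hB q) _ ⟨m, hm⟩).mpr
        (DoubleCoset.out_eq' _ _ (DoubleCoset.mk (S q) (B q) ⟨m, hm⟩))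
      change DoubleCoset.mk K A _ = p
      rw [hr, hmp, DoubleCoset.out_eq']
  exact Fintype.sum_bijective Φ hΦ _ _ fun p => hφ _ _ (DoubleCoset.out_eq' _ _ (Φ p)).symm

end Decomposition

section Linearity

variable {G H : Type*} [Group G] [Group H]

theorem indF_eq_lmapDomain (f : H →* G) :
    indF f = ⇑(Finsupp.lmapDomain ℚ ℚ fun c : SubgroupConj H => (c.rep.map f).toConj) := rfl

theorem indF_single (f : H →* G) (c : SubgroupConj H) (a : ℚ) :
    indF f (Finsupp.single c a) = Finsupp.single (c.rep.map f).toConj a :=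
  Finsupp.mapDomain_single

variable [Finite G]

theorem resF_eq_linearCombination (f : H →* G) :
    resF f = ⇑(Finsupp.linearCombination ℚ (resBasis f)) := rfl

theorem resF_single (f : H →* G) (c : SubgroupConj G) (a : ℚ) :
    resF f (Finsupp.single c a) = a • resBasis f c :=
  Finsupp.sum_single_index (zero_smul ℚ _)

end Linearity

section Mackey

variable {G : Type*} [Group G]

theorem indF_inclusion_orbitClass (H K : Subgroup G) (g : G) (Γ : Subgroup H)
    (m : conjSub g H) :
    indF (Subgroup.inclusion (inf_le_left : K ⊓ conjSub g H ≤ K))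
        (orbitClass (Subgroup.inclusion (inf_le_right : K ⊓ conjSub g H ≤ conjSub g H))
          (Γ.map (conjHom g H)) m) =
      orbitClass K.subtype (Γ.map H.subtype) (m * g) := by
  rw [orbitClass, orbitClass, indF_single, toConj_map_rep_toConj, map_inclusion_comap_inclusion,
    map_conjSub, map_conjHom_map_subtype, ← conjSub_mul]
  rfl

variable [Finite G]

theorem resF_indF_subtype_single (H K : Subgroup G) (c : SubgroupConj H) (a : ℚ) :
    resF K.subtype (indF H.subtype (Finsupp.single c a)) =
      a • ∑ p : DoubleCoset.Quotient (K : Set G) (c.rep.map H.subtype),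
        orbitClass K.subtype (c.rep.map H.subtype) p.out := by
  rw [indF_single, resF_single, resBasis_toConj, Subgroup.range_subtype]

theorem indF_resF_indF_conjHom_single (H K : Subgroup G) (g : G) (c : SubgroupConj H) (a : ℚ) :
    indF (Subgroup.inclusion (inf_le_left : K ⊓ conjSub g H ≤ K))
        (resF (Subgroup.inclusion (inf_le_right : K ⊓ conjSub g H ≤ conjSub g H))
          (indF (conjHom g H) (Finsupp.single c a))) =
      a • ∑ r : DoubleCoset.Quotient
          ((Subgroup.inclusion (inf_le_right : K ⊓ conjSub g H ≤ conjSub g H)).range :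
            Set (conjSub g H)) (c.rep.map (conjHom g H)),
        orbitClass K.subtype (c.rep.map H.subtype) (r.out * g) := by
  rw [indF_single, resF_single, resBasis_toConj, indF_eq_lmapDomain, map_smul, map_sum]
  simp only [← indF_eq_lmapDomain, indF_inclusion_orbitClass]

end Mackey

/-- The Mackey double coset formula in Burnside rings:
`Res^G_K (Ind^G_H y) = Σ_{g ∈ K\G/H} Ind^K_{K ∩ gHg⁻¹} (Res^{gHg⁻¹}_{K ∩ gHg⁻¹} (c_g y))`. -/
theorem burnside_mackey_formula (G : Type*) [Group G] [Finite G] (H K : Subgroup G)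
    (y : BQ ↥H) :
    resF K.subtype (indF H.subtype y) =
      ∑ q : DoubleCoset.Quotient (K : Set G) (H : Set G),
        indF (Subgroup.inclusion
            (inf_le_left : K ⊓ conjSub (Quotient.out q) H ≤ K))
          (resF (Subgroup.inclusion
              (inf_le_right : K ⊓ conjSub (Quotient.out q) H ≤ conjSub (Quotient.out q) H))
            (indF (conjHom (Quotient.out q) H) y)) := by
  induction y using Finsupp.induction_linear with
  | zero =>
    simp only [indF_eq_lmapDomain, resF_eq_linearCombination, map_zero, Finset.sum_const_zero]
  | add y z hy hz =>
    simp only [indF_eq_lmapDomain, resF_eq_linearCombination, map_add] at hy hz ⊢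
    rw [hy, hz, Finset.sum_add_distrib]
  | single c a =>
    simp only [indF_resF_indF_conjHom_single, resF_indF_subtype_single, ← Finset.smul_sum]
    rw [← sum_doubleCoset_eq_sum_sum_conjSub (Subgroup.map_subtype_le c.rep)
      (orbitClass K.subtype (c.rep.map H.subtype))
      (fun _ _ h => orbitClass_eq_of_mk_eq _ _ (by rwa [Subgroup.range_subtype])) _ _
      (fun _ => mem_range_inclusion_inf_iff K _) (fun q => mem_map_conjHom_iff q.out H c.rep)]

end
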